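/- arXiv:2404.04008 — 2 statements merged into one kernel-verified Lean document; each statement's English description precedes it below -/
import Mathlib

section
/- Let b ∈ {0,1}^ℕ be an infinite binary sequence beginning with 10, and suppose that the condition σⁿ(b) ⪰ σ(b) fails first at index k ≥ 1, meaning σ^k(b) ≺ σ(b) and σ^j(b) ⪰ σ(b) for all 1 ≤ j < k. Then the periodic sequence (b|_k)^∞ obtained by repeating the first k symbols of b is self-admissible, i.e. σⁿ((b|_k)^∞) ⪰ σ((b|_k)^∞) for all n ≥ 0. -/
/-- Left shift on binary sequences. -/
def shift (x : ℕ → Bool) : ℕ → Bool := fun n => x (n + 1)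

/-- Strict lexicographic order on binary sequences (false < true). -/
def lexLt (x y : ℕ → Bool) : Prop := ∃ n, (∀ i < n, x i = y i) ∧ x n < y n

/-- Lexicographic order on binary sequences. -/
def lexLe (x y : ℕ → Bool) : Prop := lexLt x y ∨ x = y

/-- A sequence is periodic. -/
def IsPeriodicSeq (b : ℕ → Bool) : Prop := ∃ p, 0 < p ∧ ∀ n, b (n + p) = b n

/-- The periodic sequence `(b|_k)^∞` repeating the first `k` symbols of `b`. -/
def periodize (k : ℕ) (b : ℕ → Bool) : ℕ → Bool := fun n => b (n % k)

open Classical in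
/-- The metric `d(ω,ν) = 2^{-|ω∧ν|+1}` where `|ω∧ν|` is the (1-based) first index of
disagreement; with 0-based sequences this index is `sInf {n | x n ≠ y n} + 1`. -/
noncomputable def distFun (x y : ℕ → Bool) : ℝ :=
  if x = y then 0 else 2 ^ (-((sInf {n | x n ≠ y n} : ℕ) + 1 : ℤ) + 1)

lemma shift_iter (y : ℕ → Bool) (n i : ℕ) : (shift^[n] y) i = y (i + n) := by
  induction n generalizing y i with
  | zero => rfl
  | succ n ih =>
    rw [Function.iterate_succ_apply, ih]
    rfl

lemma lexLt_asymm {u v : ℕ → Bool} (h : lexLt u v) (h' : lexLe v u) : False := by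
  obtain ⟨n, hn, hlt⟩ := h
  rcases h' with ⟨m, hm, hlt'⟩ | rfl
  · rcases lt_trichotomy n m with h1 | rfl | h1
    · rw [hm n h1] at hlt; exact lt_irrefl _ hlt
    · exact absurd hlt (lt_asymm hlt')
    · rw [hn m h1] at hlt'; exact lt_irrefl _ hlt'
  · exact lt_irrefl _ hlt

lemma main_aux (c x : ℕ → Bool) (K : ℕ) (hK : 1 ≤ K)
    (hxc : ∀ j, j < K → x j = c j) (hxK : x K = true) (hc0 : c 0 = false)
    (Hyp : ∀ t, 1 ≤ t → t < K → lexLe c (fun i => c (i + t)))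
    (hfail' : lexLt (fun i => c (i + K)) c) :
    ∀ t, 1 ≤ t → t ≤ K → lexLt x (fun i => x (i + t)) := by
  obtain ⟨m0, hm0a, hm0lt⟩ := hfail'
  obtain ⟨hm0f, hm0t⟩ : c (m0 + K) = false ∧ c m0 = true := Bool.lt_iff.mp hm0lt
  intro t ht1 htK
  rcases eq_or_lt_of_le htK with heqt | htK'
  · -- t = K
    subst heqt
    refine ⟨0, fun i hi => absurd hi (Nat.not_lt_zero i), ?_⟩
    show x 0 < x (0 + t)
    have h0 : x 0 = false := by rw [hxc 0 hK]; exact hc0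
    rw [Nat.zero_add, h0, hxK]
    decide
  · -- t < K
    have contra : ∀ r p, r < t → (∀ i, i < p → c (i + r) = c i) →
        c (p + r) = false → c p = true → False := by
      intro r p hr hagree hf ht'
      rcases Nat.eq_zero_or_pos r with rfl | hr1
      · rw [Nat.add_zero] at hf; rw [hf] at ht'; exact Bool.noConfusion ht'
      · have hlt : lexLt (fun i => c (i + r)) c := by
          refine ⟨p, fun i hi => hagree i hi, ?_⟩
          show c (p + r) < c p
          rw [hf, ht']; decide
        exact lexLt_asymm hlt (Hyp r hr1 (by omega))
    have hq0 : 1 ≤ K / t := (Nat.one_le_div_iff (by omega)).mpr (le_of_lt htK')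
    have hrt : K % t < t := Nat.mod_lt _ (by omega)
    have hKqr : K / t * t + K % t = K := by
      have h := Nat.div_add_mod K t
      rw [Nat.mul_comm] at h
      exact h
    set q0 := K / t with hq0def
    set r := K % t with hrdef
    rcases Hyp t ht1 htK' with ⟨m1, hm1a, hm1lt⟩ | heq
    · -- strict case, witness m1
      obtain ⟨hm1f, hm1t⟩ : c m1 = false ∧ c (m1 + t) = true := Bool.lt_iff.mp hm1lt
      have chain : ∀ q i, i + q * t < m1 + t → c i = c (i + q * t) := by
        intro q
        induction q with
        | zero => intro i _; rw [Nat.zero_mul, Nat.add_zero]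
        | succ q ih =>
          intro i hcond
          rw [Nat.succ_mul] at hcond
          have h1 : i < m1 := by omega
          have h2 : c (i + t) = c (i + t + q * t) := ih (i + t) (by omega)
          have h3 : i + t + q * t = i + (q + 1) * t := by rw [Nat.succ_mul]; omega
          rw [← h3]
          exact (hm1a i h1).trans h2
      by_cases hcase : m1 + t < K
      · -- produce the strict inequality for x
        refine ⟨m1, fun i hi => ?_, ?_⟩
        · show x i = x (i + t)
          rw [hxc i (by omega), hxc (i + t) (by omega)]
          exact hm1a i hi
        · show x m1 < x (m1 + t)
          rw [hxc m1 (by omega), hxc (m1 + t) (by omega)]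
          exact hm1lt
      · -- K ≤ m1 + t : derive False
        exfalso
        push_neg at hcase
        obtain ⟨i1, hi1⟩ : ∃ i1, K + i1 = m1 + t := Nat.le.dest hcase
        have chain1 : ∀ i, i < i1 → c (i + r) = c (i + K) := by
          intro i hi
          have h1 : i + r + q0 * t = i + K := by omega
          have h2 : c (i + r) = c (i + r + q0 * t) := chain q0 (i + r) (by omega)
          rw [h1] at h2
          exact h2
        have chain2 : c (i1 + r) = c m1 := by
          obtain ⟨q', hq'⟩ : ∃ q', q0 = q' + 1 := ⟨q0 - 1, by omega⟩
          have hqt : q' * t + t = q0 * t := by rw [hq', Nat.succ_mul]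
          have h1 : i1 + r + q' * t = m1 := by omega
          have h2 : c (i1 + r) = c (i1 + r + q' * t) := chain q' (i1 + r) (by omega)
          rw [h1] at h2
          exact h2
        rcases lt_trichotomy i1 m0 with h1 | heq1 | h1
        · have hci1 : c i1 = true := by
            have h2 := hm0a i1 h1
            have hi1K : i1 + K = m1 + t := by omega
            show c i1 = true
            rw [← h2]
            show c (i1 + K) = true
            rw [hi1K]
            exact hm1t
          refine contra r i1 hrt (fun i hi => ?_) (by rw [chain2]; exact hm1f) hci1
          rw [chain1 i hi]
          exact hm0a i (by omega)
        · have h2 : m0 + K = m1 + t := by omega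
          rw [h2] at hm0f
          rw [hm0f] at hm1t
          exact Bool.noConfusion hm1t
        · refine contra r m0 hrt (fun i hi => ?_) ?_ hm0t
          · rw [chain1 i (by omega)]
            exact hm0a i hi
          · rw [chain1 m0 h1]
            exact hm0f
    · -- equality case : derive False
      exfalso
      have hP : ∀ i, c i = c (i + t) := fun i => congrFun heq i
      have chainE : ∀ q i, c i = c (i + q * t) := by
        intro q
        induction q with
        | zero => intro i; rw [Nat.zero_mul, Nat.add_zero]
        | succ q ih =>
          intro i
          have h3 : i + t + q * t = i + (q + 1) * t := by rw [Nat.succ_mul]; omega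
          rw [← h3]
          exact (hP i).trans (ih (i + t))
      have chain1 : ∀ i, c (i + r) = c (i + K) := by
        intro i
        have h1 : i + r + q0 * t = i + K := by omega
        have h2 := chainE q0 (i + r)
        rw [h1] at h2
        exact h2
      refine contra r m0 hrt (fun i hi => ?_) ?_ hm0t
      · rw [chain1 i]; exact hm0a i hi
      · rw [chain1 m0]; exact hm0f

/-- if `b` begins with `10` and self-admissibility `σⁿ(b) ⪰ σ(b)` fails first at
index `k` (i.e. `σ^k(b) ≺ σ(b)` and `σ^j(b) ⪰ σ(b)` for all `1 ≤ j < k`), then the periodic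
sequence `(b|_k)^∞` is self-admissible: `σⁿ((b|_k)^∞) ⪰ σ((b|_k)^∞)` for all `n ≥ 0`. -/
theorem stmt_4 (b : ℕ → Bool) (hb0 : b 0 = true) (hb1 : b 1 = false)
    (k : ℕ) (hk : 1 ≤ k)
    (hfail : lexLt (shift^[k] b) (shift b))
    (hbefore : ∀ j : ℕ, 1 ≤ j → j < k → lexLe (shift b) (shift^[j] b)) :
    ∀ n : ℕ, lexLe (shift (periodize k b)) (shift^[n] (periodize k b)) := by
  obtain ⟨K, rfl⟩ : ∃ K, k = K + 1 := ⟨k - 1, by omega⟩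
  by_cases hK0 : K = 0
  · subst hK0
    intro n
    right
    funext i
    rw [shift_iter]
    show b ((i + 1) % 1) = b ((i + n) % 1)
    rw [Nat.mod_one, Nat.mod_one]
  · have hK : 1 ≤ K := by omega
    set c : ℕ → Bool := shift b with hc
    set x : ℕ → Bool := shift (periodize (K + 1) b) with hx
    have hxdef : ∀ i, x i = b ((i + 1) % (K + 1)) := fun i => rfl
    have hxc : ∀ j, j < K → x j = c j := by
      intro j hj
      rw [hxdef]
      show b ((j + 1) % (K + 1)) = b (j + 1)
      rw [Nat.mod_eq_of_lt (by omega)]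
    have hxK : x K = true := by
      rw [hxdef, Nat.mod_self]
      exact hb0
    have hc0 : c 0 = false := hb1
    have Hyp : ∀ t, 1 ≤ t → t < K → lexLe c (fun i => c (i + t)) := by
      intro t h1 h2
      have h := hbefore (t + 1) (by omega) (by omega)
      have he : shift^[t + 1] b = fun i => c (i + t) := by
        funext i
        rw [shift_iter]
        rfl
      rwa [he] at h
    have hfail' : lexLt (fun i => c (i + K)) c := by
      have he : shift^[K + 1] b = fun i => c (i + K) := by
        funext i
        rw [shift_iter]
        rfl
      rwa [he] at hfail
    have MAIN := main_aux c x K hK hxc hxK hc0 Hyp hfail'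
    intro n
    have hW : shift^[n] (periodize (K + 1) b) = fun i => b ((i + n) % (K + 1)) := by
      funext i
      rw [shift_iter]
      rfl
    rcases Nat.eq_zero_or_pos (n % (K + 1)) with h0 | hpos
    · have he : shift^[n] (periodize (K + 1) b) = fun i => x (i + K) := by
        rw [hW]
        funext i
        rw [hxdef]
        show b ((i + n) % (K + 1)) = b ((i + K + 1) % (K + 1))
        obtain ⟨q, hq⟩ : ∃ q, n = (K + 1) * q := ⟨n / (K + 1), by
          have := Nat.div_add_mod n (K + 1); omega⟩
        have e1 : (i + n) % (K + 1) = i % (K + 1) := by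
          rw [hq, Nat.add_mul_mod_self_left]
        have e2 : (i + K + 1) % (K + 1) = i % (K + 1) := by
          have h3 : i + K + 1 = i + (K + 1) * 1 := by omega
          rw [h3, Nat.add_mul_mod_self_left]
        rw [e1, e2]
      rw [he]
      exact Or.inl (MAIN K hK (le_refl K))
    · obtain ⟨t, ht⟩ : ∃ t, n % (K + 1) = t + 1 := ⟨n % (K + 1) - 1, by omega⟩
      have htK : t ≤ K := by
        have := Nat.mod_lt n (show 0 < K + 1 by omega)
        omega
      have he : shift^[n] (periodize (K + 1) b) = fun i => x (i + t) := by
        rw [hW]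
        funext i
        rw [hxdef]
        show b ((i + n) % (K + 1)) = b ((i + t + 1) % (K + 1))
        obtain ⟨q, hq⟩ : ∃ q, n = (t + 1) + (K + 1) * q := ⟨n / (K + 1), by
          have := Nat.div_add_mod n (K + 1); omega⟩
        have e1 : i + n = (i + t + 1) + (K + 1) * q := by omega
        rw [e1, Nat.add_mul_mod_self_left]
      rw [he]
      rcases Nat.eq_zero_or_pos t with rfl | ht1
      · right
        funext i
        rw [Nat.add_zero]
      · exact Or.inl (MAIN t ht1 htK)
end

section
/- Let (k₊, k₋) be the kneading invariants of the rational rotation T_{1,p/q} (with gcd(p,q)=1), written k₊ = (v₁…v_q)^∞ and k₋ = (u₁…u_q)^∞. Then k₊ and k₋ lie on the same periodic orbit of the shift — there exists an integer s ≤ q−1 with σ^s(k₊) = k₋ — and moreover v₁v₂ = 10, u₁u₂ = 01, and v_i = u_i for all 3 ≤ i ≤ q. -/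
/-- Right-continuous version of the rotation `T_{1,α}`. -/
noncomputable def rotPlus (α : ℝ) : ℝ → ℝ := fun x => Int.fract (x + α)

/-- Left-continuous version of the rotation `T_{1,α}`. -/
noncomputable def rotMinus (α : ℝ) : ℝ → ℝ := fun x =>
  if Int.fract (x + α) = 0 then 1 else Int.fract (x + α)

/-- Upper kneading sequence `k₊ = τ(c+)` of the critical point `c = 1 − α`:
the `i`-th symbol is `1` iff the right-limit orbit of `c` is `≥ c` at time `i`. -/
noncomputable def kPlus (α : ℝ) : ℕ → Bool := fun i =>
  decide (1 - α ≤ (rotPlus α)^[i] (1 - α))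

/-- Lower kneading sequence `k₋ = τ(c−)`:
the `i`-th symbol is `1` iff the left-limit orbit of `c` is `> c` at time `i`. -/
noncomputable def kMinus (α : ℝ) : ℕ → Bool := fun i =>
  decide (1 - α < (rotMinus α)^[i] (1 - α))

/-!
The orbit of `c = 1 - p/q` under the right-continuous rotation is `T^i c = (i - 1) p / q mod 1`,
so `k₊` codes the residues of `(i - 1) p` modulo `q`. The left-continuous rotation is conjugate,
by `u ↦ 1 - u`, to the rotation by `-p/q`, which shows that `k₋` is the same coding applied to
`(i - 1) p - 1`. Both are therefore `q`-periodic, and shifting by an `s` with `s p ≡ -1 (mod q)`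
turns `k₊` into `k₋`. Subtracting `1` changes the symbol of a residue `r` only when `r = 0` or
`r = q - p`, i.e. when `q ∣ (i - 1) p` or `q ∣ i p`, which by coprimality means `i ≡ 1` or `i ≡ 0`.
-/

lemma rotPlus_iterate (β : ℝ) {x : ℝ} (hx : x ∈ Set.Ico 0 1) (i : ℕ) :
    (rotPlus β)^[i] x = Int.fract (x + i * β) := by
  induction i with
  | zero => simpa using (Int.fract_eq_self.2 hx).symm
  | succ i ih =>
    rw [Function.iterate_succ_apply', ih, rotPlus,
      show Int.fract (x + i * β) + β = x + (i + 1 : ℕ) * β - ⌊x + i * β⌋ by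
        rw [Int.fract]; push_cast; ring,
      Int.fract_sub_intCast]

lemma semiconj_one_sub_rotPlus_neg_rotMinus (α : ℝ) :
    Function.Semiconj (fun u : ℝ => 1 - u) (rotPlus (-α)) (rotMinus α) := by
  intro u
  simp only [rotPlus, rotMinus]
  rw [show 1 - u + α = -(u + -α) + 1 by ring, Int.fract_add_one]
  split_ifs with h
  · rw [Int.fract_neg_eq_zero.1 h, sub_zero]
  · rw [Int.fract_neg (mt Int.fract_neg_eq_zero.2 h)]

lemma kPlus_eq_decide_fract {α : ℝ} (h0 : 0 < α) (h1 : α ≤ 1) (i : ℕ) :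
    kPlus α i = decide (1 - α ≤ Int.fract ((i - 1) * α)) := by
  rw [kPlus, rotPlus_iterate α ⟨by linarith, by linarith⟩,
    show 1 - α + i * α = (i - 1) * α + 1 by ring, Int.fract_add_one]

lemma kMinus_eq_decide_fract {α : ℝ} (h0 : 0 ≤ α) (h1 : α < 1) (i : ℕ) :
    kMinus α i = decide (Int.fract ((1 - i) * α) < α) := by
  have h := (semiconj_one_sub_rotPlus_neg_rotMinus α).iterate_right i α
  rw [kMinus, ← h, rotPlus_iterate (-α) ⟨h0, h1⟩, show α + i * -α = (1 - i) * α by ring,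
    decide_eq_decide]
  constructor <;> intro <;> linarith

/-- The symbol of the point `m / q` of the circle `ℝ / ℤ`, represented in `[0, 1)`, with respect
to the critical point `c = 1 - p / q`. -/
def rotSymbol (p q : ℕ) (m : ℤ) : Bool := decide ((q : ℤ) - p ≤ m % q)

lemma Int.neg_emod_eq {q : ℤ} (hq : 0 < q) (m : ℤ) : -m % q = q - 1 - (m - 1) % q := by
  have h0 := Int.emod_nonneg (m - 1) hq.ne'
  have h1 := Int.emod_lt_of_pos (m - 1) hq
  have h : -m ≡ q - 1 - (m - 1) % q [ZMOD q] :=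
    Int.modEq_iff_dvd.2 ⟨1 + (m - 1) / q, by rw [Int.emod_def]; ring⟩
  exact Eq.trans h (Int.emod_eq_of_lt (by omega) (by omega))

section RationalRotation

variable {p q : ℕ}

lemma rotSymbol_congr {m n : ℤ} (h : m ≡ n [ZMOD q]) : rotSymbol p q m = rotSymbol p q n := by
  rw [rotSymbol, rotSymbol, h]

lemma rotSymbol_neg {a : ℤ} (ha : 0 < a) (haq : a ≤ q) :
    rotSymbol p q (-a) = decide (a ≤ p) := by
  rw [rotSymbol, Int.neg_emod_eq (by omega), Int.emod_eq_of_lt (by omega) (by omega),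
    decide_eq_decide]
  omega

lemma rotSymbol_initial (hp : 0 < p) (hpq : p < q) :
    rotSymbol p q (-p) = true ∧ rotSymbol p q 0 = false ∧
      rotSymbol p q (-p - 1) = false ∧ rotSymbol p q (-1) = true := by
  rw [sub_eq_add_neg, ← neg_add, rotSymbol_neg (by omega) (by omega),
    rotSymbol_neg (by omega) (by omega), rotSymbol_neg (by omega) (by omega), rotSymbol]
  simp only [EuclideanDomain.zero_mod, decide_eq_true_eq, decide_eq_false_iff_not, not_le]
  omega

lemma rotSymbol_sub_one (hq : 0 < q) {m : ℤ} (hm : ¬ (q : ℤ) ∣ m) (hmp : ¬ (q : ℤ) ∣ m + p) :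
    rotSymbol p q (m - 1) = rotSymbol p q m := by
  have h0 := Int.emod_nonneg m (by omega : (q : ℤ) ≠ 0)
  have h1 := Int.emod_lt_of_pos m (by omega : (0 : ℤ) < q)
  have hne : m % q ≠ 0 := mt Int.dvd_of_emod_eq_zero hm
  have hsub : (m - 1) % q = m % q - 1 :=
    Eq.trans ((Int.mod_modEq m q).sub_right 1).symm (Int.emod_eq_of_lt (by omega) (by omega))
  have hne' : m % q ≠ q - p := by
    intro h
    apply hmp
    rw [Int.dvd_iff_emod_eq_zero, ← (Int.mod_modEq m q).add_right p, h]
    simp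
  rw [rotSymbol, rotSymbol, hsub, decide_eq_decide]
  omega

lemma exists_mul_modEq_neg_one (hcop : Nat.Coprime p q) (hq : 0 < q) :
    ∃ s < q, (s : ℤ) * p ≡ -1 [ZMOD q] := by
  have : NeZero q := ⟨hq.ne'⟩
  refine ⟨(-(p : ZMod q)⁻¹).val, ZMod.val_lt _, ?_⟩
  rw [← ZMod.intCast_eq_intCast_iff]
  push_cast
  rw [ZMod.natCast_val, ZMod.cast_id', id, neg_mul,
    ZMod.inv_mul_of_unit _ ((ZMod.isUnit_iff_coprime p q).2 hcop)]

lemma not_dvd_mul_of_coprime (hcop : Nat.Coprime p q) {k : ℤ} (hk0 : 0 < k) (hkq : k < q) :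
    ¬ (q : ℤ) ∣ k * p := fun h =>
  absurd (Int.le_of_dvd hk0 ((Nat.isCoprime_iff_coprime.2 hcop.symm).dvd_of_dvd_mul_right h))
    (not_le.2 hkq)

lemma kPlus_div (hp : 0 < p) (hpq : p ≤ q) :
    kPlus ((p : ℝ) / q) = fun i : ℕ => rotSymbol p q ((i - 1) * p) := by
  have hq : (0 : ℝ) < q := by exact_mod_cast hp.trans_le hpq
  funext i
  rw [kPlus_eq_decide_fract (by positivity) (div_le_one_of_le₀ (by exact_mod_cast hpq) hq.le),
    rotSymbol, decide_eq_decide,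
    show ((i : ℝ) - 1) * (p / q) = (((i - 1) * p : ℤ) : ℝ) / q by push_cast; ring,
    Int.fract_div_intCast_eq_div_intCast_mod,
    show (1 : ℝ) - p / q = (((q : ℤ) - p : ℤ) : ℝ) / q by push_cast; field_simp,
    div_le_div_iff_of_pos_right hq, Int.cast_le]

lemma kMinus_div (hpq : p < q) :
    kMinus ((p : ℝ) / q) = fun i : ℕ => rotSymbol p q ((i - 1) * p - 1) := by
  have hq : (0 : ℝ) < q := by exact_mod_cast (Nat.zero_le p).trans_lt hpq
  funext i
  rw [kMinus_eq_decide_fract (by positivity) ((div_lt_one hq).2 (by exact_mod_cast hpq)),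
    rotSymbol, decide_eq_decide,
    show (1 - (i : ℝ)) * (p / q) = ((-((i - 1) * p) : ℤ) : ℝ) / q by push_cast; ring,
    Int.fract_div_intCast_eq_div_intCast_mod, div_lt_div_iff_of_pos_right hq,
    ← Int.cast_natCast (R := ℝ) p, Int.cast_lt, Int.neg_emod_eq (by omega)]
  omega

end RationalRotation

lemma shift_iterate_apply (s : ℕ) (x : ℕ → Bool) (n : ℕ) : shift^[s] x n = x (n + s) := by
  induction s generalizing x with
  | zero => rfl
  | succ s ih => rw [Function.iterate_succ_apply, ih, shift, Nat.add_assoc]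

/-- for the rational rotation `T_{1,p/q}` (in lowest terms), the kneading
invariants `k₊ = (v₁…v_q)^∞`, `k₋ = (u₁…u_q)^∞` are `q`-periodic, lie on the same periodic
orbit of the shift (`σ^s(k₊) = k₋` for some `s ≤ q−1`), and satisfy `v₁v₂ = 10`, `u₁u₂ = 01`,
`v_i = u_i` for all `3 ≤ i ≤ q` (0-indexed: indices `2 ≤ i ≤ q−1`). -/
theorem stmt_11 (p q : ℕ) (hcop : Nat.Coprime p q) (hp : 0 < p) (hpq : p < q) :
    (∀ i : ℕ, kPlus ((p : ℝ) / q) (i + q) = kPlus ((p : ℝ) / q) i) ∧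
    (∀ i : ℕ, kMinus ((p : ℝ) / q) (i + q) = kMinus ((p : ℝ) / q) i) ∧
    (∃ s : ℕ, s ≤ q - 1 ∧ shift^[s] (kPlus ((p : ℝ) / q)) = kMinus ((p : ℝ) / q)) ∧
    kPlus ((p : ℝ) / q) 0 = true ∧ kPlus ((p : ℝ) / q) 1 = false ∧
    kMinus ((p : ℝ) / q) 0 = false ∧ kMinus ((p : ℝ) / q) 1 = true ∧
    (∀ i : ℕ, 2 ≤ i → i ≤ q - 1 → kPlus ((p : ℝ) / q) i = kMinus ((p : ℝ) / q) i) := by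
  have hq : 0 < q := hp.trans hpq
  obtain ⟨s, hsq, hs⟩ := exists_mul_modEq_neg_one hcop hq
  have hinit := rotSymbol_initial hp hpq
  rw [kPlus_div hp hpq.le, kMinus_div hpq]
  refine ⟨fun i => rotSymbol_congr (Int.modEq_iff_dvd.2 ⟨-p, by push_cast; ring⟩),
    fun i => rotSymbol_congr (Int.modEq_iff_dvd.2 ⟨-p, by push_cast; ring⟩),
    ⟨s, by omega, funext fun n => ?_⟩, by simpa using hinit.1, by simpa using hinit.2.1,
    by simpa using hinit.2.2.1, by simpa using hinit.2.2.2, fun i h2i hiq => ?_⟩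
  · rw [shift_iterate_apply]
    refine rotSymbol_congr ?_
    convert hs.add_left (((n : ℤ) - 1) * p) using 2 <;> push_cast <;> ring
  · refine (rotSymbol_sub_one hq (not_dvd_mul_of_coprime hcop (by omega) (by omega)) ?_).symm
    rw [show ((i : ℤ) - 1) * p + p = i * p by ring]
    exact not_dvd_mul_of_coprime hcop (by omega) (by omega)
end
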